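/- arXiv:1802.10277 — 5 statements merged into one kernel-verified Lean document; each statement's English description precedes it below -/
import Mathlib

section
/- Let $R$ be a commutative ring and let $\cdots\xrightarrow{\alpha}L\xrightarrow{\beta}L\xrightarrow{\alpha}L\xrightarrow{\beta}\cdots$ be an exact sequence of $R$-modules (i.e. $\alpha,\beta$ are endomorphisms of $L$ with $\operatorname{Im}\alpha=\operatorname{Ker}\beta$ and $\operatorname{Im}\beta=\operatorname{Ker}\alpha$). Let $x\in R$ be an $L$-regular element and set $Z=\alpha(L)+xL$ and $W=\beta(L)+xL$. Then the sequences $L\oplus L\xrightarrow{\left(\begin{smallmatrix}\beta&-x\\0&\alpha\end{smallmatrix}\right)}L\oplus L\xrightarrow{(\alpha\;\; x)}L\to L/Z\to 0$ and $L\oplus L\xrightarrow{\left(\begin{smallmatrix}\alpha&x\\0&\beta\end{smallmatrix}\right)}L\oplus L\xrightarrow{(\beta\;\;-x)}L\to L/W\to 0$ are exact. -/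
/-!
STATEMENT 1: Let `R` be a commutative ring and let
`⋯ →α L →β L →α L →β ⋯` be an exact sequence of `R`-modules.  Let `x ∈ R` be
an `L`-regular element and set `Z = α(L) + xL` and `W = β(L) + xL`.  Then the
sequences
`L ⊕ L →(β -x; 0 α) L ⊕ L →(α x) L → L/Z → 0` and
`L ⊕ L →(α x; 0 β) L ⊕ L →(β -x) L → L/W → 0`
are exact.
-/

theorem four_term_sequences_exact {R : Type*} [CommRing R]
    {L : Type*} [AddCommGroup L] [Module R L]
    (α β : L →ₗ[R] L) (x : R)
    (hαβ : LinearMap.range α = LinearMap.ker β)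
    (hβα : LinearMap.range β = LinearMap.ker α)
    (hreg : ∀ l : L, x • l = 0 → l = 0)
    (Z W : Submodule R L)
    (hZ : Z = LinearMap.range α ⊔ LinearMap.range (x • (LinearMap.id : L →ₗ[R] L)))
    (hW : W = LinearMap.range β ⊔ LinearMap.range (x • (LinearMap.id : L →ₗ[R] L))) :
    (LinearMap.range
        (((β ∘ₗ LinearMap.fst R L L) - x • LinearMap.snd R L L).prod
          (α ∘ₗ LinearMap.snd R L L)) =
      LinearMap.ker ((α ∘ₗ LinearMap.fst R L L) + x • LinearMap.snd R L L) ∧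
     LinearMap.range ((α ∘ₗ LinearMap.fst R L L) + x • LinearMap.snd R L L) =
      LinearMap.ker Z.mkQ ∧
     Function.Surjective Z.mkQ) ∧
    (LinearMap.range
        (((α ∘ₗ LinearMap.fst R L L) + x • LinearMap.snd R L L).prod
          (β ∘ₗ LinearMap.snd R L L)) =
      LinearMap.ker ((β ∘ₗ LinearMap.fst R L L) - x • LinearMap.snd R L L) ∧
     LinearMap.range ((β ∘ₗ LinearMap.fst R L L) - x • LinearMap.snd R L L) =
      LinearMap.ker W.mkQ ∧
     Function.Surjective W.mkQ) := by
  have hαβ' : ∀ s : L, β (α s) = 0 := fun s => by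
    have : α s ∈ LinearMap.ker β := hαβ ▸ LinearMap.mem_range_self α s
    exact this
  have hβα' : ∀ s : L, α (β s) = 0 := fun s => by
    have : β s ∈ LinearMap.ker α := hβα ▸ LinearMap.mem_range_self β s
    exact this
  refine ⟨⟨?_, ?_, Submodule.mkQ_surjective _⟩, ?_, ?_, Submodule.mkQ_surjective _⟩
  · ext ⟨a, b⟩
    simp only [LinearMap.mem_range, LinearMap.mem_ker, Prod.exists]
    constructor
    · rintro ⟨s, t, h⟩
      rw [← h]
      show α (β s - x • t) + x • α t = 0
      simp [map_sub, map_smul, hβα']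
    · intro h
      replace h : α a + x • b = 0 := h
      have hxb : x • b = -α a := eq_neg_of_add_eq_zero_right h
      have hb : β b = 0 := hreg _ (by rw [← map_smul, hxb, map_neg, hαβ' a, neg_zero])
      obtain ⟨t, ht⟩ : b ∈ LinearMap.range α := hαβ ▸ LinearMap.mem_ker.mpr hb
      have hα : α (a + x • t) = 0 := by
        rw [map_add, map_smul, ht]
        exact h
      obtain ⟨s, hs⟩ : a + x • t ∈ LinearMap.range β := hβα ▸ LinearMap.mem_ker.mpr hα
      refine ⟨s, t, ?_⟩
      show (β s - x • t, α t) = (a, b)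
      rw [Prod.mk.injEq]
      exact ⟨by rw [hs]; abel, ht⟩
  · rw [Submodule.ker_mkQ, hZ]
    ext y
    simp only [LinearMap.mem_range, LinearMap.add_apply, LinearMap.coe_comp,
      Function.comp_apply, LinearMap.smul_apply, LinearMap.fst_apply, LinearMap.snd_apply,
      Prod.exists]
    constructor
    · rintro ⟨a, b, rfl⟩
      exact Submodule.add_mem _ (Submodule.mem_sup_left (LinearMap.mem_range_self α a))
        (Submodule.mem_sup_right ⟨b, rfl⟩)
    · intro hy
      rcases Submodule.mem_sup.mp hy with ⟨z, ⟨a, rfl⟩, w, ⟨b, rfl⟩, rfl⟩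
      exact ⟨a, b, by simp⟩
  · ext ⟨a, b⟩
    simp only [LinearMap.mem_range, LinearMap.mem_ker, Prod.exists]
    constructor
    · rintro ⟨s, t, h⟩
      rw [← h]
      show β (α s + x • t) - x • β t = 0
      simp [map_add, map_smul, hαβ']
    · intro h
      replace h : β a - x • b = 0 := h
      have hxb : β a = x • b := sub_eq_zero.mp h
      have hb : α b = 0 := hreg _ (by rw [← map_smul, ← hxb, hβα' a])
      obtain ⟨t, ht⟩ : b ∈ LinearMap.range β := hβα ▸ LinearMap.mem_ker.mpr hb
      have hβ : β (a - x • t) = 0 := by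
        rw [map_sub, map_smul, ht, ← hxb, sub_self]
      obtain ⟨s, hs⟩ : a - x • t ∈ LinearMap.range α := hαβ ▸ LinearMap.mem_ker.mpr hβ
      refine ⟨s, t, ?_⟩
      show (α s + x • t, β t) = (a, b)
      rw [Prod.mk.injEq]
      exact ⟨by rw [hs]; abel, ht⟩
  · rw [Submodule.ker_mkQ, hW]
    ext y
    simp only [LinearMap.mem_range, LinearMap.sub_apply, LinearMap.coe_comp,
      Function.comp_apply, LinearMap.smul_apply, LinearMap.fst_apply, LinearMap.snd_apply,
      Prod.exists]
    constructor
    · rintro ⟨a, b, rfl⟩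
      exact Submodule.sub_mem _ (Submodule.mem_sup_left (LinearMap.mem_range_self β a))
        (Submodule.mem_sup_right ⟨b, rfl⟩)
    · intro hy
      rcases Submodule.mem_sup.mp hy with ⟨z, ⟨a, rfl⟩, w, ⟨b, rfl⟩, rfl⟩
      exact ⟨a, -b, by simp⟩
end

section
/- Let $R$ be a commutative ring, let $\cdots\xrightarrow{\alpha}L\xrightarrow{\beta}L\xrightarrow{\alpha}L\xrightarrow{\beta}\cdots$ be an exact sequence of $R$-modules, let $x\in R$ be an $L$-regular element such that $\beta(L)\subseteq Z:=\alpha(L)+xL$. Then there exists a unique $R$-linear endomorphism $\eta$ of $Z$ such that $\beta(z)=x\cdot\eta(z)$ for all $z\in Z$; explicitly, $\eta(\alpha(s)+xt)=\beta(t)$ for all $s,t\in L$. -/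
/-!
STATEMENT 2: Let `R` be a commutative ring, `⋯ →α L →β L →α L →β ⋯` an exact
sequence of `R`-modules, and `x ∈ R` an `L`-regular element such that
`β(L) ⊆ Z := α(L) + xL`.  Then there exists a unique `R`-linear endomorphism
`η` of `Z` such that `β(z) = x • η(z)` for all `z ∈ Z`; explicitly,
`η(α(s) + x • t) = β(t)` for all `s, t ∈ L`.
-/

theorem exists_unique_eta {R : Type*} [CommRing R]
    {L : Type*} [AddCommGroup L] [Module R L]
    (α β : L →ₗ[R] L) (x : R)
    (hαβ : LinearMap.range α = LinearMap.ker β)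
    (hβα : LinearMap.range β = LinearMap.ker α)
    (hreg : ∀ l : L, x • l = 0 → l = 0)
    (Z : Submodule R L)
    (hZ : Z = LinearMap.range α ⊔ LinearMap.range (x • (LinearMap.id : L →ₗ[R] L)))
    (hβZ : LinearMap.range β ≤ Z) :
    ∃ η : Z →ₗ[R] Z,
      (∀ z : Z, β (z : L) = x • ((η z : L))) ∧
      (∀ (s t : L) (h : α s + x • t ∈ Z), ((η ⟨α s + x • t, h⟩ : L) = β t)) ∧
      (∀ η' : Z →ₗ[R] Z, (∀ z : Z, β (z : L) = x • ((η' z : L))) → η' = η) := by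
  have hx : ∀ a b : L, x • a = x • b → a = b := by
    intro a b h
    have : x • (a - b) = 0 := by rw [smul_sub, h, sub_self]
    have := hreg _ this
    exact sub_eq_zero.mp this
  have hβα0 : ∀ s : L, β (α s) = 0 := by
    intro s
    have : α s ∈ LinearMap.ker β := hαβ ▸ LinearMap.mem_range_self α s
    exact this
  have key : ∀ z : Z, ∃ w : Z, β (z : L) = x • (w : L) := by
    rintro ⟨zl, hz⟩
    rw [hZ] at hz
    obtain ⟨a, ha, b, hb, hab⟩ := Submodule.mem_sup.mp hz
    obtain ⟨s, hs⟩ := ha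
    obtain ⟨t, ht⟩ := hb
    refine ⟨⟨β t, hβZ ⟨t, rfl⟩⟩, ?_⟩
    have htb : x • t = b := by simpa using ht
    simp only [← hab, ← hs, ← htb, map_add, hβα0, zero_add, map_smul]
  choose f hf using key
  refine ⟨{ toFun := f, map_add' := ?_, map_smul' := ?_ }, ?_, ?_, ?_⟩
  · intro z₁ z₂
    apply Subtype.ext
    apply hx
    rw [← hf (z₁ + z₂)]
    push_cast
    rw [smul_add, ← hf z₁, ← hf z₂, map_add]
  · intro r z
    apply Subtype.ext
    apply hx
    rw [← hf (r • z)]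
    push_cast
    rw [id_eq, smul_comm x r, ← hf z, map_smul]
  · intro z
    exact hf z
  · intro s t h
    apply hx
    simp only [LinearMap.coe_mk, AddHom.coe_mk]
    rw [← hf ⟨α s + x • t, h⟩]
    simp [map_add, hβα0, map_smul]
  · intro η' hη'
    ext z
    apply hx
    rw [← hη' z]
    exact hf z
end

section
/- Let $R$ be a commutative ring, let $\cdots\xrightarrow{\alpha}L\xrightarrow{\beta}L\xrightarrow{\alpha}L\xrightarrow{\beta}\cdots$ be an exact sequence of $R$-modules, let $x\in R$ be an $L$-regular element such that $\beta(L)\subseteq Z:=\alpha(L)+xL$, and let $M$ be an $R$-submodule with $Z\subseteq M\subseteq L$. Set $N=\beta(M)+xZ$. Then the sequence $0\to Z\xrightarrow{\left(\begin{smallmatrix}\theta\\\eta\end{smallmatrix}\right)}M\oplus Z\xrightarrow{(\beta\;\;-x)}N\to 0$ is exact, where $\theta:Z\to M$ is the inclusion map, $\eta:Z\to Z$ is the unique $R$-linear map with $\beta(z)=x\eta(z)$ for all $z\in Z$ (so $\eta(\alpha(s)+xt)=\beta(t)$), and $(\beta\;\;-x)$ sends $(m,z)$ to $\beta(m)-xz$.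 -/
/-!
STATEMENT 3: Let `R` be a commutative ring, `⋯ →α L →β L →α L →β ⋯` an exact
sequence of `R`-modules, `x ∈ R` an `L`-regular element with
`β(L) ⊆ Z := α(L) + xL`, and let `M` be an `R`-submodule with `Z ⊆ M ⊆ L`.
Set `N = β(M) + xZ`.  Then the sequence
`0 → Z →(θ, η) M ⊕ Z →(β -x) N → 0`
is exact, where `θ : Z → M` is the inclusion, `η : Z → Z` is the unique
`R`-linear map with `β(z) = x • η(z)` for all `z ∈ Z`, and `(β -x)` sends
`(m, z)` to `β(m) - x • z`.

Exactness of `0 → Z → M ⊕ Z → N → 0` is expressed by: the first map is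
injective, its range is the kernel of `(m, z) ↦ β m - x • z : M ⊕ Z → L`, and
the range of the latter map is exactly `N`.
-/

theorem short_exact_sequence_of_degeneration {R : Type*} [CommRing R]
    {L : Type*} [AddCommGroup L] [Module R L]
    (α β : L →ₗ[R] L) (x : R)
    (hαβ : LinearMap.range α = LinearMap.ker β)
    (hβα : LinearMap.range β = LinearMap.ker α)
    (hreg : ∀ l : L, x • l = 0 → l = 0)
    (Z M N : Submodule R L)
    (hZ : Z = LinearMap.range α ⊔ LinearMap.range (x • (LinearMap.id : L →ₗ[R] L)))
    (hβZ : LinearMap.range β ≤ Z)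
    (hZM : Z ≤ M)
    (hN : N = Submodule.map β M ⊔ Submodule.map (x • (LinearMap.id : L →ₗ[R] L)) Z)
    (η : Z →ₗ[R] Z) (hη : ∀ z : Z, β (z : L) = x • ((η z : L))) :
    Function.Injective ((Submodule.inclusion hZM).prod η) ∧
    LinearMap.range ((Submodule.inclusion hZM).prod η) =
      LinearMap.ker
        (((β ∘ₗ M.subtype) ∘ₗ LinearMap.fst R M Z) -
          x • (Z.subtype ∘ₗ LinearMap.snd R M Z)) ∧
    LinearMap.range
        (((β ∘ₗ M.subtype) ∘ₗ LinearMap.fst R M Z) -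
          x • (Z.subtype ∘ₗ LinearMap.snd R M Z)) = N := by
  refine ⟨?_, ?_, ?_⟩
  · intro a b h
    exact Submodule.inclusion_injective hZM (congrArg Prod.fst h)
  · ext ⟨m, z⟩
    simp only [LinearMap.mem_range, LinearMap.mem_ker, LinearMap.sub_apply,
      LinearMap.comp_apply, LinearMap.smul_apply, LinearMap.fst_apply,
      LinearMap.snd_apply, Submodule.coe_subtype]
    constructor
    · rintro ⟨w, hw⟩
      have h1 : ((Submodule.inclusion hZM w : M) : L) = (m : L) :=
        congrArg (fun p : M × Z => ((p.1 : M) : L)) hw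
      have h2 : ((η w : Z) : L) = (z : L) :=
        congrArg (fun p : M × Z => ((p.2 : Z) : L)) hw
      have h3 : ((Submodule.inclusion hZM w : M) : L) = (w : L) := rfl
      rw [← h1, ← h2, h3, hη w, sub_self]
    · intro h
      have hβm : β (m : L) = x • (z : L) := sub_eq_zero.mp h
      have hαz : α (z : L) = 0 := by
        have h0 : α (β (m : L)) = 0 := by
          have : β (m : L) ∈ LinearMap.ker α := hβα ▸ LinearMap.mem_range_self β _
          exact this
        have hx : x • α (z : L) = 0 := by rw [← map_smul, ← hβm, h0]
        exact hreg _ hx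
      obtain ⟨u, hu⟩ : (z : L) ∈ LinearMap.range β := by rw [hβα]; exact hαz
      obtain ⟨v, hv⟩ : (m : L) - x • u ∈ LinearMap.range α := by
        rw [hαβ, LinearMap.mem_ker, map_sub, map_smul, hu, hβm, sub_self]
      have hmZ : (m : L) ∈ Z := by
        rw [hZ]
        refine Submodule.mem_sup.mpr ⟨(m : L) - x • u, ⟨v, hv⟩, x • u, ⟨u, by simp⟩, by simp⟩
      refine ⟨⟨(m : L), hmZ⟩, ?_⟩
      have hθ : Submodule.inclusion hZM ⟨(m : L), hmZ⟩ = m := Subtype.ext rfl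
      have hηm : η ⟨(m : L), hmZ⟩ = z := by
        apply Subtype.ext
        have hx : x • (((η ⟨(m : L), hmZ⟩ : Z) : L) - (z : L)) = 0 := by
          rw [smul_sub, ← hη ⟨(m : L), hmZ⟩, hβm, sub_self]
        exact sub_eq_zero.mp (hreg _ hx)
      simp [LinearMap.prod_apply, hθ, hηm]
  · apply le_antisymm
    · rintro l ⟨⟨m, z⟩, rfl⟩
      have : (((β ∘ₗ M.subtype) ∘ₗ LinearMap.fst R M Z) -
          x • (Z.subtype ∘ₗ LinearMap.snd R M Z)) (m, z) = β (m : L) - x • (z : L) := rfl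
      rw [this, hN]
      exact sub_mem (Submodule.mem_sup_left ⟨(m : L), m.2, rfl⟩)
        (Submodule.mem_sup_right ⟨(z : L), z.2, by simp⟩)
    · rw [hN]
      apply sup_le
      · rintro l ⟨w, hw, rfl⟩
        exact ⟨(⟨w, hw⟩, 0), by simp⟩
      · rintro l ⟨w, hw, rfl⟩
        exact ⟨(0, -⟨w, hw⟩), by simp⟩
end

section
/- Let $R$ be a commutative ring, let $\cdots\xrightarrow{\alpha}L\xrightarrow{\beta}L\xrightarrow{\alpha}L\xrightarrow{\beta}\cdots$ be an exact sequence of $R$-modules, and let $x\in R$ be an $L$-regular element such that $\beta(L)\subseteq Z:=\alpha(L)+xL$. Let $\eta:Z\to Z$ be the unique $R$-linear map with $\beta(z)=x\eta(z)$ for all $z\in Z$. If $\beta$ is nilpotent, then $\eta$ is nilpotent. Consequently, for any $R$-submodule $M$ with $Z\subseteq M\subseteq L$, putting $N=\beta(M)+xZ$, there is a short exact sequence $0\to Z\to M\oplus Z\to N\to 0$ whose first map has components $(\theta,\eta)$ with $\eta$ nilpotent; that is, $M$ degenerates to $N$ in the Riedtmann–Zwara sense. -/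
/-!
STATEMENT 4: Let `R` be a commutative ring, `⋯ →α L →β L →α L →β ⋯` an exact
sequence of `R`-modules, and `x ∈ R` an `L`-regular element such that
`β(L) ⊆ Z := α(L) + xL`.  Let `η : Z → Z` be the unique `R`-linear map with
`β(z) = x • η(z)` for all `z ∈ Z`.  If `β` is nilpotent, then `η` is
nilpotent.  Consequently, for any `R`-submodule `M` with `Z ⊆ M ⊆ L`, putting
`N = β(M) + xZ`, `M` degenerates to `N` in the Riedtmann–Zwara sense.
-/

universe u v w

/-- The data witnessing a Riedtmann–Zwara degeneration of `M` to `N`: a short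
exact sequence `0 → Z → M ⊕ Z → N → 0` whose first map has components
`(h, g)` with `g` a nilpotent endomorphism of `Z`. -/
structure RiedtmannZwaraDatum (R : Type u) [CommRing R]
    (M : Type v) [AddCommGroup M] [Module R M]
    (N : Type w) [AddCommGroup N] [Module R N] : Type (max u (v + 1) w) where
  Z : Type v
  [addCommGroupZ : AddCommGroup Z]
  [moduleZ : Module R Z]
  h : Z →ₗ[R] M
  g : Z →ₗ[R] Z
  p : M × Z →ₗ[R] N
  nilpotent_g : IsNilpotent g
  injective_first : Function.Injective (h.prod g)
  exact_middle : LinearMap.range (h.prod g) = LinearMap.ker p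
  surjective_last : Function.Surjective p

/-- `M` degenerates to `N` in the Riedtmann–Zwara sense. -/
def Degenerates (R : Type u) [CommRing R]
    (M : Type v) [AddCommGroup M] [Module R M]
    (N : Type w) [AddCommGroup N] [Module R N] : Prop :=
  Nonempty (RiedtmannZwaraDatum R M N)

theorem eta_nilpotent_and_degenerates {R : Type u} [CommRing R]
    {L : Type v} [AddCommGroup L] [Module R L]
    (α β : L →ₗ[R] L) (x : R)
    (hαβ : LinearMap.range α = LinearMap.ker β)
    (hβα : LinearMap.range β = LinearMap.ker α)
    (hreg : ∀ l : L, x • l = 0 → l = 0)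
    (Z : Submodule R L)
    (hZ : Z = LinearMap.range α ⊔ LinearMap.range (x • (LinearMap.id : L →ₗ[R] L)))
    (hβZ : LinearMap.range β ≤ Z)
    (η : Z →ₗ[R] Z) (hη : ∀ z : Z, β (z : L) = x • ((η z : L)))
    (hβnil : IsNilpotent β)
    (M N : Submodule R L) (hZM : Z ≤ M)
    (hN : N = Submodule.map β M ⊔ Submodule.map (x • (LinearMap.id : L →ₗ[R] L)) Z) :
    IsNilpotent η ∧ Degenerates R M N := by
  -- x^n is regular
  have hregpow : ∀ n : ℕ, ∀ l : L, x ^ n • l = 0 → l = 0 := by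
    intro n
    induction n with
    | zero => intro l hl; simpa using hl
    | succ n ih =>
      intro l hl
      rw [pow_succ, mul_smul] at hl
      exact hreg l (ih _ hl)
  -- iterate formula
  have hiter : ∀ n : ℕ, ∀ z : Z, (β ^ n) (z : L) = x ^ n • (((η ^ n) z : Z) : L) := by
    intro n
    induction n with
    | zero => intro z; simp
    | succ n ih =>
      intro z
      have h1 : (β ^ (n+1)) (z : L) = (β ^ n) (β (z : L)) := by
        rw [pow_succ]; rfl
      have h2 : ((η ^ (n+1)) z) = (η ^ n) (η z) := by rw [pow_succ]; rfl
      rw [h1, hη z, map_smul, ih (η z), h2, smul_smul, ← pow_succ']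
  -- η is nilpotent
  have hηnil : IsNilpotent η := by
    obtain ⟨n, hn⟩ := hβnil
    refine ⟨n, ?_⟩
    ext z
    have h1 : (β ^ n) (z : L) = 0 := by rw [hn]; rfl
    rw [hiter n z] at h1
    have h2 : (((η ^ n) z : Z) : L) = 0 := hregpow n _ h1
    simpa using h2
  refine ⟨hηnil, ?_⟩
  -- Construct the datum
  set p₀ : (↥M × ↥Z) →ₗ[R] L :=
    LinearMap.coprod (β.comp M.subtype) (-(x • Z.subtype)) with hp₀
  have hp₀apply : ∀ v : ↥M × ↥Z, p₀ v = β (v.1 : L) - x • (v.2 : L) := by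
    intro v
    simp [hp₀, sub_eq_add_neg]
  have hmem : ∀ v : ↥M × ↥Z, p₀ v ∈ N := by
    intro v
    rw [hp₀apply, hN]
    have h1 : β (v.1 : L) ∈ Submodule.map β M := ⟨v.1, v.1.2, rfl⟩
    have h2 : -(x • (v.2 : L)) ∈
        Submodule.map (x • (LinearMap.id : L →ₗ[R] L)) Z := by
      refine ⟨-(v.2 : L), neg_mem v.2.2, ?_⟩
      simp
    rw [sub_eq_add_neg]
    exact Submodule.add_mem_sup h1 h2
  refine ⟨⟨↥Z, Submodule.inclusion hZM, η, p₀.codRestrict N hmem, hηnil, ?_, ?_, ?_⟩⟩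
  · -- injective
    intro a b hab
    have h1 : (Submodule.inclusion hZM a : L) = (Submodule.inclusion hZM b : L) :=
      congrArg (fun q => ((Prod.fst q : ↥M) : L)) hab
    exact Subtype.ext h1
  · -- exactness
    ext v
    constructor
    · rintro ⟨z, rfl⟩
      have : p₀ ((Submodule.inclusion hZM) z, η z) = 0 := by
        rw [hp₀apply]
        simp only [Submodule.coe_inclusion]
        rw [hη z, sub_self]
      simp only [LinearMap.mem_ker, LinearMap.prod_apply, Pi.prod]
      exact Subtype.ext this
    · intro hv
      have hv0 : p₀ v = 0 := congrArg Subtype.val hv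
      rw [hp₀apply] at hv0
      have hbm : β (v.1 : L) = x • (v.2 : L) := by
        rwa [sub_eq_zero] at hv0
      -- show α (v.2) = 0
      have hα2 : α (v.2 : L) = 0 := by
        apply hreg
        rw [← map_smul, ← hbm]
        have : β (v.1 : L) ∈ LinearMap.ker α := by
          rw [← hβα]; exact ⟨_, rfl⟩
        exact this
      obtain ⟨l, hl⟩ : (v.2 : L) ∈ LinearMap.range β := by
        rw [hβα]; exact hα2
      have hβml : β ((v.1 : L) - x • l) = 0 := by
        rw [map_sub, map_smul, hl, hbm, sub_self]
      obtain ⟨l', hl'⟩ : (v.1 : L) - x • l ∈ LinearMap.range α := by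
        rw [hαβ]; exact hβml
      have hmZ : (v.1 : L) ∈ Z := by
        refine hZ.ge (Submodule.mem_sup.mpr ⟨α l', ⟨l', rfl⟩, x • l, ⟨l, by simp⟩, ?_⟩)
        rw [hl']; abel
      refine ⟨⟨(v.1 : L), hmZ⟩, ?_⟩
      have hη' : η ⟨(v.1 : L), hmZ⟩ = v.2 := by
        apply Subtype.ext
        have h0 : x • ((η ⟨(v.1 : L), hmZ⟩ : L) - (v.2 : L)) = 0 := by
          rw [smul_sub, ← hη ⟨(v.1 : L), hmZ⟩, hbm]
          exact sub_self _
        exact sub_eq_zero.mp (hreg _ h0)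
      simp only [LinearMap.prod_apply, Function.prod, hη']
      exact Prod.ext (Subtype.ext rfl) rfl
  · -- surjective
    rintro ⟨n, hn⟩
    rw [hN] at hn
    obtain ⟨a, ⟨m, hm, rfl⟩, b, ⟨z, hz, rfl⟩, hab⟩ := Submodule.mem_sup.mp hn
    refine ⟨(⟨m, hm⟩, ⟨-z, neg_mem hz⟩), ?_⟩
    apply Subtype.ext
    show p₀ _ = _
    rw [hp₀apply]
    simp only
    rw [← hab]
    simp
end

section
/- Let $R$ be a commutative ring, let $\cdots\xrightarrow{\alpha}L\xrightarrow{\beta}L\xrightarrow{\alpha}L\xrightarrow{\beta}\cdots$ be an exact sequence of $R$-modules, let $x\in R$ be an $L$-regular element such that $\beta(L)\subseteq Z:=\alpha(L)+xL$, and let $M$ be an $R$-submodule with $Z\subseteq M\subseteq L$. Set $N=\beta(M)+xZ$ and $W=\beta(L)+xL$. Then there is a short exact sequence of $R$-modules $0\to L/M\oplus L/Z\to L/N\to L/W\to 0$. -/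
/-!
STATEMENT 5: Let `R` be a commutative ring, `⋯ →α L →β L →α L →β ⋯` an exact
sequence of `R`-modules, `x ∈ R` an `L`-regular element with
`β(L) ⊆ Z := α(L) + xL`, and `M` an `R`-submodule with `Z ⊆ M ⊆ L`.  Set
`N = β(M) + xZ` and `W = β(L) + xL`.  Then there is a short exact sequence of
`R`-modules `0 → L/M ⊕ L/Z → L/N → L/W → 0`.
-/

theorem exists_short_exact_sequence_of_quotients {R : Type*} [CommRing R]
    {L : Type*} [AddCommGroup L] [Module R L]
    (α β : L →ₗ[R] L) (x : R)
    (hαβ : LinearMap.range α = LinearMap.ker β)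
    (hβα : LinearMap.range β = LinearMap.ker α)
    (hreg : ∀ l : L, x • l = 0 → l = 0)
    (Z M N W : Submodule R L)
    (hZ : Z = LinearMap.range α ⊔ LinearMap.range (x • (LinearMap.id : L →ₗ[R] L)))
    (hβZ : LinearMap.range β ≤ Z)
    (hZM : Z ≤ M)
    (hN : N = Submodule.map β M ⊔ Submodule.map (x • (LinearMap.id : L →ₗ[R] L)) Z)
    (hW : W = LinearMap.range β ⊔ LinearMap.range (x • (LinearMap.id : L →ₗ[R] L))) :
    ∃ (f : ((L ⧸ M) × (L ⧸ Z)) →ₗ[R] L ⧸ N) (g : (L ⧸ N) →ₗ[R] L ⧸ W),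
      Function.Injective f ∧
      LinearMap.range f = LinearMap.ker g ∧
      Function.Surjective g := by
  set xI : L →ₗ[R] L := x • (LinearMap.id : L →ₗ[R] L) with hxI
  have hxI_apply : ∀ l : L, xI l = x • l := fun l => rfl
  -- basic inclusions
  have hxL_Z : LinearMap.range xI ≤ Z := hZ ▸ le_sup_right
  have hα_Z : LinearMap.range α ≤ Z := hZ ▸ le_sup_left
  have hβM_N : Submodule.map β M ≤ N := hN ▸ le_sup_left
  have hxZ_N : Submodule.map xI Z ≤ N := hN ▸ le_sup_right
  have hNW : N ≤ W := by
    rw [hN, hW]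
    exact sup_le (le_trans (LinearMap.map_le_range) le_sup_left)
      (le_trans (LinearMap.map_le_range) le_sup_right)
  -- the maps
  have hM1 : M ≤ N.comap β := fun m hm => hβM_N ⟨m, hm, rfl⟩
  have hZ1 : Z ≤ N.comap xI := fun z hz => hxZ_N ⟨z, hz, rfl⟩
  refine ⟨LinearMap.coprod (Submodule.mapQ M N β hM1) (Submodule.mapQ Z N xI hZ1),
    Submodule.mapQ N W LinearMap.id hNW, ?_, ?_, ?_⟩
  · -- injectivity
    rw [← LinearMap.ker_eq_bot, eq_bot_iff]
    rintro ⟨a', b'⟩ hab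
    obtain ⟨a, rfl⟩ := Submodule.Quotient.mk_surjective M a'
    obtain ⟨b, rfl⟩ := Submodule.Quotient.mk_surjective Z b'
    have hab' : (Submodule.Quotient.mk (β a + x • b) : L ⧸ N) = 0 := by
      rw [Submodule.Quotient.mk_eq_zero]
      simp [Submodule.mapQ_apply, ← Submodule.Quotient.mk_add] at hab
      exact hab
    rw [Submodule.Quotient.mk_eq_zero, hN, Submodule.mem_sup] at hab'
    obtain ⟨m', ⟨m, hm, rfl⟩, z', ⟨z, hz, rfl⟩, heq⟩ := hab'
    -- heq : β m + xI z = β a + x • b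
    have key : β (a - m) = x • (z - b) := by
      have := heq
      rw [hxI_apply] at this
      rw [map_sub, smul_sub]
      abel_nf
      linear_combination (norm := module) -this
    -- α (z - b) = 0
    have hzb : z - b ∈ LinearMap.ker α := by
      have h0 : β (a - m) ∈ LinearMap.ker α := hβα ▸ ⟨a - m, rfl⟩
      have : x • α (z - b) = 0 := by
        rw [← map_smul, ← key]; exact h0
      exact hreg _ this
    obtain ⟨e, he⟩ : z - b ∈ LinearMap.range β := hβα ▸ hzb
    have hbZ : b ∈ Z := by
      have hβe : β e ∈ Z := hβZ ⟨e, rfl⟩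
      have : b = z - β e := by rw [he]; abel
      rw [this]; exact sub_mem hz hβe
    have haM : a ∈ M := by
      have h1 : β (a - m - x • e) = 0 := by
        rw [map_sub, key, map_smul, he, smul_sub]; abel
      have h2 : a - m - x • e ∈ LinearMap.range α := hαβ ▸ h1
      have h3 : a - m - x • e ∈ M := hZM (hα_Z h2)
      have h4 : x • e ∈ M := hZM (hxL_Z ⟨e, rfl⟩)
      have : a = (a - m - x • e) + x • e + m := by abel
      rw [this]; exact add_mem (add_mem h3 h4) hm
    rw [Submodule.mem_bot, Prod.mk_eq_zero]
    constructor <;> rw [Submodule.Quotient.mk_eq_zero] <;> assumption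
  · -- range = ker
    apply le_antisymm
    · rintro y ⟨⟨a', b'⟩, rfl⟩
      obtain ⟨a, rfl⟩ := Submodule.Quotient.mk_surjective M a'
      obtain ⟨b, rfl⟩ := Submodule.Quotient.mk_surjective Z b'
      simp only [LinearMap.mem_ker, LinearMap.coprod_apply, Submodule.mapQ_apply,
        ← Submodule.Quotient.mk_add, LinearMap.id_apply]
      rw [Submodule.Quotient.mk_eq_zero, hW]
      exact Submodule.add_mem_sup ⟨a, rfl⟩ ⟨b, rfl⟩
    · rintro y hy
      obtain ⟨l, rfl⟩ := Submodule.Quotient.mk_surjective N y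
      rw [LinearMap.mem_ker, Submodule.mapQ_apply, LinearMap.id_apply,
        Submodule.Quotient.mk_eq_zero, hW, Submodule.mem_sup] at hy
      obtain ⟨u', ⟨u, rfl⟩, v', ⟨v, rfl⟩, heq⟩ := hy
      refine ⟨(Submodule.Quotient.mk u, Submodule.Quotient.mk v), ?_⟩
      simp only [LinearMap.coprod_apply, Submodule.mapQ_apply, ← Submodule.Quotient.mk_add]
      rw [heq]
  · -- surjectivity
    intro y
    obtain ⟨l, rfl⟩ := Submodule.Quotient.mk_surjective W y
    exact ⟨Submodule.Quotient.mk l, by rw [Submodule.mapQ_apply, LinearMap.id_apply]⟩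
end
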